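/- arXiv:1008.3595 — 3 statements merged into one kernel-verified Lean document; each statement's English description precedes it below -/
import Mathlib

section
/- Let N ≥ 1 and let Ω be a smooth bounded domain in ℝ^N. Let λ, γ be parameters with 0 < γ ≤ λ, and let (u,v) be a smooth solution of the Gelfand system: u and v are smooth on the closure of Ω, satisfy −Δu = λ e^v and −Δv = γ e^u in Ω, and u = v = 0 on ∂Ω. Then (γ/λ)·u ≤ v ≤ u everywhere in Ω. -/
open MeasureTheory Real Filter Topology Bornology

/-- The Laplacian of `f : ℝ^N → ℝ`: `Δf = ∑ j ∂²f/∂x_j²`. -/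
noncomputable def laplacian {N : ℕ} (f : EuclideanSpace ℝ (Fin N) → ℝ)
    (x : EuclideanSpace ℝ (Fin N)) : ℝ :=
  ∑ i : Fin N, fderiv ℝ (fun y => fderiv ℝ f y (EuclideanSpace.single i 1)) x
    (EuclideanSpace.single i 1)

section Aux

open Set

/-- Second derivative test (necessary condition): at a local minimum of a `C²` function
of one real variable, the second derivative is nonnegative. -/
lemma second_deriv_nonneg_of_isLocalMin {g : ℝ → ℝ} (hg : ContDiffAt ℝ 2 g 0)
    (hmin : IsLocalMin g 0) : 0 ≤ deriv (deriv g) 0 := by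
  by_contra hd
  push_neg at hd
  obtain ⟨U, hU, hgU⟩ := hg.contDiffOn le_rfl (by simp)
  obtain ⟨ε, hε, hball⟩ := Metric.mem_nhds_iff.mp hU
  have hgB : ContDiffOn ℝ 2 g (Metric.ball 0 ε) := hgU.mono hball
  have hopen : IsOpen (Metric.ball (0:ℝ) ε) := Metric.isOpen_ball
  have h0B : (0:ℝ) ∈ Metric.ball (0:ℝ) ε := Metric.mem_ball_self hε
  have hdg : ContDiffOn ℝ 1 (deriv g) (Metric.ball 0 ε) :=
    hgB.deriv_of_isOpen hopen (by norm_num)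
  have hdga : DifferentiableAt ℝ (deriv g) 0 :=
    ((hdg 0 h0B).contDiffAt (hopen.mem_nhds h0B)).differentiableAt one_ne_zero
  have hder : HasDerivAt (deriv g) (deriv (deriv g) 0) 0 := hdga.hasDerivAt
  have h0 : deriv g 0 = 0 := hmin.deriv_eq_zero
  have hslope := hasDerivAt_iff_tendsto_slope.mp hder
  have hneg : ∀ᶠ t in 𝓝[≠] (0:ℝ), slope (deriv g) 0 t < 0 :=
    hslope.eventually_lt_const hd
  have hneg' : ∀ᶠ t in 𝓝[>] (0:ℝ), deriv g t < 0 := by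
    filter_upwards [hneg.filter_mono (nhdsWithin_mono _ (fun x hx => ne_of_gt hx)),
      self_mem_nhdsWithin] with t ht ht0
    rw [slope_def_field, h0, sub_zero, sub_zero] at ht
    have := mul_neg_of_neg_of_pos ht ht0
    rwa [div_mul_cancel₀] at this
    exact ne_of_gt ht0
  obtain ⟨δ, hδmem, hδ⟩ := mem_nhdsGT_iff_exists_Ioo_subset.mp hneg'
  obtain ⟨r, hr, hrball⟩ := Metric.eventually_nhds_iff.mp hmin
  set t0 : ℝ := min (min (δ/2) (ε/2)) (r/2) with ht0def
  have hδ0 : 0 < δ := hδmem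
  have ht0pos : 0 < t0 := by positivity
  have ht0δ : t0 < δ := lt_of_le_of_lt (le_trans (min_le_left _ _) (min_le_left _ _)) (by linarith)
  have ht0ε : t0 < ε := lt_of_le_of_lt (le_trans (min_le_left _ _) (min_le_right _ _)) (by linarith)
  have ht0r : t0 < r := lt_of_le_of_lt (min_le_right _ _) (by linarith)
  have hIcc : Icc (0:ℝ) t0 ⊆ Metric.ball 0 ε := by
    intro s hs
    rw [Metric.mem_ball, Real.dist_eq, sub_zero, abs_of_nonneg hs.1]
    exact lt_of_le_of_lt hs.2 ht0ε
  have hanti : StrictAntiOn g (Icc 0 t0) := by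
    apply strictAntiOn_of_deriv_neg (convex_Icc 0 t0) (hgB.continuousOn.mono hIcc)
    intro s hs
    rw [interior_Icc] at hs
    exact hδ ⟨hs.1, lt_trans hs.2 ht0δ⟩
  have h1 : g t0 < g 0 :=
    hanti (left_mem_Icc.mpr ht0pos.le) (right_mem_Icc.mpr ht0pos.le) ht0pos
  have h2 : g 0 ≤ g t0 :=
    hrball (y := t0) (by rw [Real.dist_eq, sub_zero, abs_of_nonneg ht0pos.le]; exact ht0r)
  linarith

/-- At an interior local minimum of a smooth function, every second directional
derivative is nonnegative. -/
lemma second_dir_nonneg {N : ℕ} {f : EuclideanSpace ℝ (Fin N) → ℝ}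
    {U : Set (EuclideanSpace ℝ (Fin N))} (hU : IsOpen U) {x : EuclideanSpace ℝ (Fin N)}
    (hx : x ∈ U) (hf : ContDiffOn ℝ (⊤ : ℕ∞) f U) (hmin : IsLocalMin f x)
    (e : EuclideanSpace ℝ (Fin N)) :
    0 ≤ fderiv ℝ (fun y => fderiv ℝ f y e) x e := by
  have hfat : ∀ y ∈ U, ContDiffAt ℝ (⊤ : ℕ∞) f y := fun y hy => (hf y hy).contDiffAt (hU.mem_nhds hy)
  set L : ℝ → EuclideanSpace ℝ (Fin N) := fun t => x + t • e with hLdef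
  have hL0 : L 0 = x := by simp [hLdef]
  have hLd : ∀ t : ℝ, HasDerivAt L e t := fun t => by
    simpa [hLdef] using ((hasDerivAt_id t).smul_const e).const_add x
  have hLc : Continuous L := continuous_const.add (continuous_id.smul continuous_const)
  set g : ℝ → ℝ := fun t => f (L t) with hgdef
  have hgmin : IsLocalMin g 0 := by
    have := (hL0 ▸ hmin : IsLocalMin f (L 0)).comp_continuous hLc.continuousAt
    exact this
  have hgc : ContDiffAt ℝ 2 g 0 := by
    have h1 : ContDiffAt ℝ 2 f (L 0) := by
      rw [hL0]; exact ((hfat x hx).of_le (WithTop.coe_le_coe.mpr le_top : ((2:ℕ∞) : WithTop ℕ∞) ≤ ((⊤:ℕ∞) : WithTop ℕ∞)))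
    have h2 : ContDiffAt ℝ 2 L 0 :=
      (contDiff_const.add (contDiff_id.smul contDiff_const)).contDiffAt
    exact h1.comp 0 h2
  have key := second_deriv_nonneg_of_isLocalMin hgc hgmin
  have hV : IsOpen (L ⁻¹' U) := hU.preimage hLc
  have h0V : (0:ℝ) ∈ L ⁻¹' U := by simp [hL0, hx]
  have hderg : ∀ t ∈ L ⁻¹' U, deriv g t = fderiv ℝ f (L t) e := by
    intro t ht
    have hfd : HasFDerivAt f (fderiv ℝ f (L t)) (L t) :=
      (((hfat _ ht).differentiableAt (by simp))).hasFDerivAt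
    exact (hfd.comp_hasDerivAt t (hLd t)).deriv
  have heq : deriv g =ᶠ[𝓝 (0:ℝ)] fun t => fderiv ℝ f (L t) e := by
    filter_upwards [hV.mem_nhds h0V] with t ht using hderg t ht
  have hdh : DifferentiableAt ℝ (fun y => fderiv ℝ f y e) x := by
    have h1 : ContDiffAt ℝ 1 (fderiv ℝ f) x := (hfat x hx).fderiv_right (WithTop.coe_le_coe.mpr le_top)
    exact (ContinuousLinearMap.apply ℝ ℝ e).differentiableAt.comp x (h1.differentiableAt one_ne_zero)
  have hfinal : HasDerivAt (fun t => fderiv ℝ f (L t) e)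
      (fderiv ℝ (fun y => fderiv ℝ f y e) x e) 0 := by
    have h := HasFDerivAt.comp_hasDerivAt (l := fun y => fderiv ℝ f y e) 0
      (hL0 ▸ hdh.hasFDerivAt) (hLd 0)
    simpa [Function.comp_def, hL0] using h
  rw [heq.deriv_eq, hfinal.deriv] at key
  exact key

/-- Linearity of the Laplacian at a point, for smooth functions on an open set. -/
lemma laplacian_comb {N : ℕ} {f g : EuclideanSpace ℝ (Fin N) → ℝ}
    {U : Set (EuclideanSpace ℝ (Fin N))} (hU : IsOpen U) {x : EuclideanSpace ℝ (Fin N)}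
    (hx : x ∈ U) (hf : ContDiffOn ℝ (⊤ : ℕ∞) f U) (hg : ContDiffOn ℝ (⊤ : ℕ∞) g U) (a b : ℝ) :
    laplacian (fun y => a * f y + b * g y) x = a * laplacian f x + b * laplacian g x := by
  have hfat : ∀ y ∈ U, ContDiffAt ℝ (⊤ : ℕ∞) f y := fun y hy => (hf y hy).contDiffAt (hU.mem_nhds hy)
  have hgat : ∀ y ∈ U, ContDiffAt ℝ (⊤ : ℕ∞) g y := fun y hy => (hg y hy).contDiffAt (hU.mem_nhds hy)
  have main : ∀ e : EuclideanSpace ℝ (Fin N),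
      fderiv ℝ (fun y => fderiv ℝ (fun z => a * f z + b * g z) y e) x e
        = a * fderiv ℝ (fun y => fderiv ℝ f y e) x e
          + b * fderiv ℝ (fun y => fderiv ℝ g y e) x e := by
    intro e
    have heq : (fun y => fderiv ℝ (fun z => a * f z + b * g z) y e)
        =ᶠ[𝓝 x] fun y => a * fderiv ℝ f y e + b * fderiv ℝ g y e := by
      filter_upwards [hU.mem_nhds hx] with y hy
      have hdf : DifferentiableAt ℝ f y := (hfat y hy).differentiableAt (by simp)
      have hdg : DifferentiableAt ℝ g y := (hgat y hy).differentiableAt (by simp)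
      rw [fderiv_fun_add (hdf.const_mul a) (hdg.const_mul b), fderiv_const_mul hdf,
        fderiv_const_mul hdg]
      simp
    have hdf' : DifferentiableAt ℝ (fun y => fderiv ℝ f y e) x := by
      have h1 : ContDiffAt ℝ 1 (fderiv ℝ f) x := (hfat x hx).fderiv_right (WithTop.coe_le_coe.mpr le_top)
      exact (ContinuousLinearMap.apply ℝ ℝ e).differentiableAt.comp x (h1.differentiableAt one_ne_zero)
    have hdg' : DifferentiableAt ℝ (fun y => fderiv ℝ g y e) x := by
      have h1 : ContDiffAt ℝ 1 (fderiv ℝ g) x := (hgat x hx).fderiv_right (WithTop.coe_le_coe.mpr le_top)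
      exact (ContinuousLinearMap.apply ℝ ℝ e).differentiableAt.comp x (h1.differentiableAt one_ne_zero)
    rw [heq.fderiv_eq, fderiv_fun_add (hdf'.const_mul a) (hdg'.const_mul b),
      fderiv_const_mul hdf', fderiv_const_mul hdg']
    simp
  unfold laplacian
  simp only [main]
  rw [Finset.sum_add_distrib, ← Finset.mul_sum, ← Finset.mul_sum]

/-- Minimum principle: a smooth function on the closure of a bounded open set, vanishing
on the frontier, whose Laplacian is negative wherever the function is negative, is
nonnegative on the closure. -/
lemma nonneg_of_min_principle {N : ℕ} {Ω : Set (EuclideanSpace ℝ (Fin N))}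
    (hΩo : IsOpen Ω) (hΩb : IsBounded Ω) (hne : Ω.Nonempty)
    {f : EuclideanSpace ℝ (Fin N) → ℝ} (hf : ContDiffOn ℝ (⊤ : ℕ∞) f (closure Ω))
    (hbd : ∀ x ∈ frontier Ω, f x = 0)
    (hlap : ∀ x ∈ Ω, f x < 0 → laplacian f x < 0) :
    ∀ x ∈ closure Ω, 0 ≤ f x := by
  have hK : IsCompact (closure Ω) := hΩb.isCompact_closure
  obtain ⟨x0, hx0, hmin⟩ := hK.exists_isMinOn hne.closure hf.continuousOn
  have h0 : 0 ≤ f x0 := by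
    by_contra h
    push_neg at h
    have hx0Ω : x0 ∈ Ω := by
      by_contra hnot
      have hfr : x0 ∈ frontier Ω := by
        rw [hΩo.frontier_eq]
        exact ⟨hx0, hnot⟩
      rw [hbd x0 hfr] at h
      exact absurd h (lt_irrefl 0)
    have hloc : IsLocalMin f x0 :=
      hmin.isLocalMin (Filter.mem_of_superset (hΩo.mem_nhds hx0Ω) subset_closure)
    have hlap0 : 0 ≤ laplacian f x0 := by
      unfold laplacian
      exact Finset.sum_nonneg fun i _ =>
        second_dir_nonneg hΩo hx0Ω (hf.mono subset_closure) hloc _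
    exact absurd (hlap x0 hx0Ω h) (not_lt.mpr hlap0)
  intro x hx
  exact le_trans h0 (hmin hx)

end Aux

/-- If `0 < γ ≤ λ` and `(u,v)` is a smooth solution of the Gelfand system
`−Δu = λ e^v`, `−Δv = γ e^u` in `Ω`, `u = v = 0` on `∂Ω`, then
`(γ/λ)·u ≤ v ≤ u` in `Ω`. -/
theorem gelfand_comparison {N : ℕ} (hN : 1 ≤ N) (Ω : Set (EuclideanSpace ℝ (Fin N)))
    (hΩo : IsOpen Ω) (hΩb : IsBounded Ω) (hΩc : IsConnected Ω)
    (lam gam : ℝ) (hgam : 0 < gam) (hgl : gam ≤ lam)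
    (u v : EuclideanSpace ℝ (Fin N) → ℝ)
    (hu : ContDiffOn ℝ (⊤ : ℕ∞) u (closure Ω)) (hv : ContDiffOn ℝ (⊤ : ℕ∞) v (closure Ω))
    (hequ : ∀ x ∈ Ω, -laplacian u x = lam * Real.exp (v x))
    (heqv : ∀ x ∈ Ω, -laplacian v x = gam * Real.exp (u x))
    (hbd : ∀ x ∈ frontier Ω, u x = 0 ∧ v x = 0) :
    ∀ x ∈ Ω, (gam / lam) * u x ≤ v x ∧ v x ≤ u x := by
  have hlam : 0 < lam := lt_of_lt_of_le hgam hgl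
  have hne : Ω.Nonempty := hΩc.nonempty
  have huΩ : ContDiffOn ℝ (⊤ : ℕ∞) u Ω := hu.mono subset_closure
  have hvΩ : ContDiffOn ℝ (⊤ : ℕ∞) v Ω := hv.mono subset_closure
  -- Step 1 : u ≥ 0 on the closure of Ω
  have hu0 : ∀ x ∈ closure Ω, 0 ≤ u x := by
    apply nonneg_of_min_principle hΩo hΩb hne hu (fun x hx => (hbd x hx).1)
    intro x hx _
    have := hequ x hx
    nlinarith [Real.exp_pos (v x)]
  -- Step 2 : v ≤ u on the closure of Ω
  have hw : ∀ x ∈ closure Ω, 0 ≤ u x - v x := by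
    have hceq : ∀ y, u y - v y = 1 * u y + (-1) * v y := fun y => by ring
    have hc : ContDiffOn ℝ (⊤ : ℕ∞) (fun y => u y - v y) (closure Ω) := hu.sub hv
    apply nonneg_of_min_principle hΩo hΩb hne hc
    · intro x hx
      rw [(hbd x hx).1, (hbd x hx).2]
      ring
    · intro x hx hneg
      have hlapeq : laplacian (fun y => u y - v y) x
          = 1 * laplacian u x + (-1) * laplacian v x := by
        have := laplacian_comb hΩo hx huΩ hvΩ 1 (-1)
        rw [← this]
        congr 1
        ext y
        ring
      have h1 := hequ x hx
      have h2 := heqv x hx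
      have hexp : Real.exp (u x) < Real.exp (v x) := Real.exp_lt_exp.mpr (by linarith)
      have hlapu : laplacian u x = -(lam * Real.exp (v x)) := by linarith
      have hlapv : laplacian v x = -(gam * Real.exp (u x)) := by linarith
      rw [hlapeq, hlapu, hlapv]
      have hexp0 : 0 < Real.exp (u x) := Real.exp_pos _
      nlinarith
  -- Step 3 : v ≥ (γ/λ) u on the closure of Ω
  have hz : ∀ x ∈ closure Ω, 0 ≤ v x - (gam / lam) * u x := by
    have hc : ContDiffOn ℝ (⊤ : ℕ∞) (fun y => v y - (gam / lam) * u y) (closure Ω) :=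
      hv.sub (ContDiffOn.mul contDiffOn_const hu)
    apply nonneg_of_min_principle hΩo hΩb hne hc
    · intro x hx
      rw [(hbd x hx).1, (hbd x hx).2]
      ring
    · intro x hx hneg
      have hux : 0 ≤ u x := hu0 x (subset_closure hx)
      have hvu : v x < u x := by
        have h1 : (gam / lam) ≤ 1 := (div_le_one hlam).mpr hgl
        nlinarith
      have hlapeq : laplacian (fun y => v y - (gam / lam) * u y) x
          = 1 * laplacian v x + (-(gam / lam)) * laplacian u x := by
        have := laplacian_comb hΩo hx hvΩ huΩ 1 (-(gam / lam))
        rw [← this]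
        congr 1
        ext y
        ring
      have h1 := hequ x hx
      have h2 := heqv x hx
      have hexp : Real.exp (v x) < Real.exp (u x) := Real.exp_lt_exp.mpr hvu
      have hlapu : laplacian u x = -(lam * Real.exp (v x)) := by linarith
      have hlapv : laplacian v x = -(gam * Real.exp (u x)) := by linarith
      rw [hlapeq, hlapu, hlapv]
      have hq : gam / lam * lam = gam := div_mul_cancel₀ gam (ne_of_gt hlam)
      have hexp0 : 0 < Real.exp (v x) := Real.exp_pos _
      nlinarith
  intro x hx
  have h1 := hz x (subset_closure hx)
  have h2 := hw x (subset_closure hx)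
  constructor <;> linarith
end

section
/- Let N ≥ 1 and let Ω be a smooth bounded domain in ℝ^N. Let λ, γ be parameters with 0 < γ ≤ λ, and let (u,v) be a smooth solution of the Gelfand system: u and v are smooth on the closure of Ω, satisfy −Δu = λ e^v and −Δv = γ e^u in Ω, and u = v = 0 on ∂Ω. Then u ≥ v everywhere in Ω. -/
open MeasureTheory Real Filter Topology Bornology

/-- Second derivative test (necessary condition): if `g` has a local minimum at `0`,
`g` is differentiable near `0` with derivative `G`, and `G` has derivative `L` at `0`,
then `0 ≤ L`. -/
lemma second_deriv_test_1d {g G : ℝ → ℝ} {L : ℝ}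
    (hmin : IsLocalMin g 0)
    (hg : ∀ᶠ t in 𝓝 (0:ℝ), HasDerivAt g (G t) t)
    (hG : HasDerivAt G L 0) : 0 ≤ L := by
  by_contra hL
  push_neg at hL
  have hg0 : HasDerivAt g (G 0) 0 := hg.self_of_nhds
  have hG0 : G 0 = 0 := by
    have := hmin.deriv_eq_zero
    rw [hg0.deriv] at this; exact this
  have hslope : Tendsto (fun t => G t / t) (𝓝[>] (0:ℝ)) (𝓝 L) := by
    have h1 := hasDerivAt_iff_tendsto_slope.mp hG
    have h2 : Tendsto (slope G 0) (𝓝[>] (0:ℝ)) (𝓝 L) :=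
      h1.mono_left (nhdsWithin_mono _ (fun t ht => ne_of_gt ht))
    refine h2.congr (fun t => ?_)
    simp [slope, hG0, div_eq_inv_mul]
  have hev1 : ∀ᶠ t in 𝓝[>] (0:ℝ), G t < 0 := by
    filter_upwards [hslope.eventually_lt_const hL, self_mem_nhdsWithin] with t h1 h2
    exact (div_neg_iff.mp h1).resolve_left (fun h => absurd h2 (not_lt.mpr h.2.le)) |>.1
  obtain ⟨e1, he1, hB1⟩ : ∃ e > 0, ∀ t ∈ Set.Ioo (0:ℝ) e, G t < 0 := by
    rcases Metric.mem_nhdsWithin_iff.mp hev1 with ⟨e, he, h⟩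
    refine ⟨e, he, fun t ht => h ⟨?_, ht.1⟩⟩
    rw [Metric.mem_ball, Real.dist_eq, sub_zero, abs_of_pos ht.1]; exact ht.2
  obtain ⟨e2, he2, hB2⟩ := Metric.eventually_nhds_iff_ball.mp (hg.and hmin)
  set d : ℝ := min e1 e2 / 2 with hd
  have hd0 : 0 < d := by positivity
  have hde1 : d < e1 := (half_lt_self (lt_min he1 he2)).trans_le (min_le_left _ _)
  have hde2 : d < e2 := (half_lt_self (lt_min he1 he2)).trans_le (min_le_right _ _)
  have hsub : Set.Icc (0:ℝ) d ⊆ Metric.ball (0:ℝ) e2 := by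
    intro t ht
    rw [Metric.mem_ball, Real.dist_eq, sub_zero, abs_of_nonneg ht.1]
    exact lt_of_le_of_lt ht.2 hde2
  have hanti : StrictAntiOn g (Set.Icc (0:ℝ) d) := by
    apply strictAntiOn_of_deriv_neg (convex_Icc _ _)
    · intro t ht
      exact ((hB2 t (hsub ht)).1.continuousAt).continuousWithinAt
    · intro t ht
      rw [interior_Icc] at ht
      rw [(hB2 t (hsub ⟨ht.1.le, ht.2.le⟩)).1.deriv]
      exact hB1 t ⟨ht.1, ht.2.trans hde1⟩
  have h1 : g d < g 0 := hanti (by constructor <;> simp [hd0.le]) (by simp [hd0.le]) hd0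
  have h2 : g 0 ≤ g d := (hB2 d (hsub ⟨hd0.le, le_rfl⟩)).2
  linarith

/-- At an interior minimum of a smooth function, every second directional derivative
is nonnegative. -/
lemma second_dirderiv_nonneg {N : ℕ} {f : EuclideanSpace ℝ (Fin N) → ℝ}
    {U : Set (EuclideanSpace ℝ (Fin N))} (hU : IsOpen U) {x₀ : EuclideanSpace ℝ (Fin N)}
    (hx₀ : x₀ ∈ U) (hf : ∀ y ∈ U, ContDiffAt ℝ (⊤ : ℕ∞) f y) (hmin : IsMinOn f U x₀)
    (e : EuclideanSpace ℝ (Fin N)) :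
    0 ≤ fderiv ℝ (fun y => fderiv ℝ f y e) x₀ e := by
  set line : ℝ → EuclideanSpace ℝ (Fin N) := fun t => x₀ + t • e with hline
  have hl0 : line 0 = x₀ := by simp [hline]
  have hlc : Continuous line := by continuity
  have hld : ∀ t : ℝ, HasDerivAt line e t := by
    intro t
    have h1 : HasDerivAt (fun s : ℝ => s • e) ((1:ℝ) • e) t := (hasDerivAt_id t).smul_const e
    rw [one_smul] at h1
    exact h1.const_add x₀
  set g : ℝ → ℝ := fun t => f (line t) with hgdef
  set G : ℝ → ℝ := fun t => fderiv ℝ f (line t) e with hGdef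
  have hg : ∀ᶠ t in 𝓝 (0:ℝ), HasDerivAt g (G t) t := by
    have hV : line ⁻¹' U ∈ 𝓝 (0:ℝ) :=
      hlc.continuousAt.preimage_mem_nhds (by rw [hl0]; exact hU.mem_nhds hx₀)
    filter_upwards [hV] with t ht
    have hdf : HasFDerivAt f (fderiv ℝ f (line t)) (line t) :=
      ((hf _ ht).differentiableAt (by simp)).hasFDerivAt
    exact hdf.comp_hasDerivAt t (hld t)
  have hΦ : DifferentiableAt ℝ (fun y => fderiv ℝ f y e) x₀ := by
    have h1 : ContDiffAt ℝ 1 (fderiv ℝ f) x₀ := (hf _ hx₀).fderiv_right (by exact WithTop.coe_le_coe.mpr le_top)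
    exact (h1.differentiableAt one_ne_zero).clm_apply (differentiableAt_const e)
  have hG' : HasDerivAt G (fderiv ℝ (fun y => fderiv ℝ f y e) x₀ e) 0 := by
    have h2 : HasFDerivAt (fun y => fderiv ℝ f y e)
        (fderiv ℝ (fun y => fderiv ℝ f y e) x₀) (line 0) := by
      rw [hl0]; exact hΦ.hasFDerivAt
    exact h2.comp_hasDerivAt 0 (hld 0)
  have hlm : IsLocalMin g 0 := by
    have h1 : IsLocalMin f x₀ := hmin.isLocalMin (hU.mem_nhds hx₀)
    have h2 : Tendsto line (𝓝 0) (𝓝 x₀) := by rw [← hl0]; exact hlc.continuousAt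
    filter_upwards [h2.eventually h1] with t ht
    simpa [hgdef, hl0] using ht
  exact second_deriv_test_1d hlm hg hG'

/-- If `0 < γ ≤ λ` and `(u,v)` is a smooth solution of the Gelfand system
`−Δu = λ e^v`, `−Δv = γ e^u` in `Ω`, `u = v = 0` on `∂Ω`, then `u ≥ v` in `Ω`. -/
theorem gelfand_u_ge_v {N : ℕ} (hN : 1 ≤ N) (Ω : Set (EuclideanSpace ℝ (Fin N)))
    (hΩo : IsOpen Ω) (hΩb : IsBounded Ω) (hΩc : IsConnected Ω)
    (lam gam : ℝ) (hgam : 0 < gam) (hgl : gam ≤ lam)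
    (u v : EuclideanSpace ℝ (Fin N) → ℝ)
    (hu : ContDiffOn ℝ (⊤ : ℕ∞) u (closure Ω)) (hv : ContDiffOn ℝ (⊤ : ℕ∞) v (closure Ω))
    (hequ : ∀ x ∈ Ω, -laplacian u x = lam * Real.exp (v x))
    (heqv : ∀ x ∈ Ω, -laplacian v x = gam * Real.exp (u x))
    (hbd : ∀ x ∈ frontier Ω, u x = 0 ∧ v x = 0) :
    ∀ x ∈ Ω, v x ≤ u x := by
  by_contra hcon
  push_neg at hcon
  obtain ⟨z, hzΩ, hz⟩ := hcon
  set w : EuclideanSpace ℝ (Fin N) → ℝ := fun x => u x - v x with hwdef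
  have hmemnhds : ∀ y ∈ Ω, closure Ω ∈ 𝓝 y := fun y hy =>
    mem_nhds_iff.mpr ⟨Ω, subset_closure, hΩo, hy⟩
  have hucd : ∀ y ∈ Ω, ContDiffAt ℝ (⊤ : ℕ∞) u y := fun y hy => hu.contDiffAt (hmemnhds y hy)
  have hvcd : ∀ y ∈ Ω, ContDiffAt ℝ (⊤ : ℕ∞) v y := fun y hy => hv.contDiffAt (hmemnhds y hy)
  have hwcd : ∀ y ∈ Ω, ContDiffAt ℝ (⊤ : ℕ∞) w y := fun y hy => (hucd y hy).sub (hvcd y hy)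
  have hK : IsCompact (closure Ω) := hΩb.isCompact_closure
  have hKne : (closure Ω).Nonempty := ⟨z, subset_closure hzΩ⟩
  have hwc : ContinuousOn w (closure Ω) := (hu.continuousOn).sub (hv.continuousOn)
  obtain ⟨x₀, hx₀K, hminK⟩ := hK.exists_isMinOn hKne hwc
  have hwx₀ : w x₀ < 0 := lt_of_le_of_lt (hminK (subset_closure hzΩ)) (by simpa [hwdef] using hz)
  have hx₀Ω : x₀ ∈ Ω := by
    by_contra h
    have hfr : x₀ ∈ frontier Ω := by
      rw [hΩo.frontier_eq]; exact ⟨hx₀K, h⟩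
    obtain ⟨h1, h2⟩ := hbd x₀ hfr
    simp [hwdef, h1, h2] at hwx₀
  have hminΩ : IsMinOn w Ω x₀ := hminK.on_subset subset_closure
  have hlap_nonneg : 0 ≤ laplacian w x₀ := by
    apply Finset.sum_nonneg
    intro i _
    exact second_dirderiv_nonneg hΩo hx₀Ω hwcd hminΩ _
  have hΦdiff : ∀ (f : EuclideanSpace ℝ (Fin N) → ℝ), (∀ y ∈ Ω, ContDiffAt ℝ (⊤ : ℕ∞) f y) →
      ∀ e, DifferentiableAt ℝ (fun y => fderiv ℝ f y e) x₀ := by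
    intro f hf e
    have h1 : ContDiffAt ℝ 1 (fderiv ℝ f) x₀ := (hf _ hx₀Ω).fderiv_right (by exact WithTop.coe_le_coe.mpr le_top)
    exact (h1.differentiableAt one_ne_zero).clm_apply (differentiableAt_const e)
  have hsplit : laplacian w x₀ = laplacian u x₀ - laplacian v x₀ := by
    unfold laplacian
    rw [← Finset.sum_sub_distrib]
    apply Finset.sum_congr rfl
    intro i _
    set e := EuclideanSpace.single (𝕜 := ℝ) i (1:ℝ)
    have hee : (fun y => fderiv ℝ w y e) =ᶠ[𝓝 x₀]
        (fun y => fderiv ℝ u y e - fderiv ℝ v y e) := by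
      filter_upwards [hΩo.mem_nhds hx₀Ω] with y hy
      rw [hwdef]
      rw [fderiv_fun_sub ((hucd y hy).differentiableAt (by simp)) ((hvcd y hy).differentiableAt (by simp))]
      simp
    have h1 : fderiv ℝ (fun y => fderiv ℝ w y e) x₀ =
        fderiv ℝ (fun y => fderiv ℝ u y e - fderiv ℝ v y e) x₀ := hee.fderiv_eq
    rw [h1, fderiv_fun_sub (hΦdiff u hucd e) (hΦdiff v hvcd e)]
    simp
  have h1 := hequ x₀ hx₀Ω
  have h2 := heqv x₀ hx₀Ω
  have huv : u x₀ < v x₀ := by simpa [hwdef, sub_neg] using hwx₀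
  have hkey : gam * Real.exp (u x₀) < lam * Real.exp (v x₀) := by
    have := Real.exp_lt_exp.mpr huv
    nlinarith [Real.exp_pos (u x₀), Real.exp_pos (v x₀)]
  rw [hsplit] at hlap_nonneg
  linarith
end

section
/- Let N ≥ 1 and let Ω be a smooth bounded domain in ℝ^N. Let 0 < γ ≤ λ and let u, v, φ, ψ be functions smooth on the closure of Ω with φ > 0 and ψ > 0 in Ω, vanishing on ∂Ω (for φ, ψ), and let K ≥ 0 be a constant. Assume u ≥ v in Ω, that −Δφ = λ e^v ψ + K φ and −Δψ = γ e^u φ + K ψ in Ω, and that the operator −Δ − K + γ e^v satisfies the maximum principle on Ω, i.e. every function w that is smooth on the closure of Ω with −Δw − Kw + γ e^v w ≥ 0 in Ω and w ≥ 0 on ∂Ω satisfies w ≥ 0 in Ω. Then ψ/φ ≥ γ/λ everywhere in Ω. -/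
open MeasureTheory Real Filter Topology Bornology

lemma laplacian_lin {N : ℕ} {f g : EuclideanSpace ℝ (Fin N) → ℝ} (a b : ℝ)
    {x : EuclideanSpace ℝ (Fin N)} (hf : ContDiffAt ℝ 2 f x) (hg : ContDiffAt ℝ 2 g x) :
    laplacian (fun y => a * f y + b * g y) x = a * laplacian f x + b * laplacian g x := by
  unfold laplacian
  rw [Finset.mul_sum, Finset.mul_sum, ← Finset.sum_add_distrib]
  refine Finset.sum_congr rfl fun i _ => ?_
  set e := EuclideanSpace.single i (1:ℝ)
  have hfe : ∀ᶠ y in 𝓝 x, ContDiffAt ℝ 2 f y := hf.eventually (by simp)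
  have hge : ∀ᶠ y in 𝓝 x, ContDiffAt ℝ 2 g y := hg.eventually (by simp)
  have heq : (fun y => fderiv ℝ (fun z => a * f z + b * g z) y e)
      =ᶠ[𝓝 x] (fun y => a * fderiv ℝ f y e + b * fderiv ℝ g y e) := by
    filter_upwards [hfe, hge] with y hfy hgy
    have hdf := hfy.differentiableAt two_ne_zero
    have hdg := hgy.differentiableAt two_ne_zero
    rw [fderiv_fun_add ((hdf.const_mul a)) ((hdg.const_mul b)),
      fderiv_const_mul hdf, fderiv_const_mul hdg]
    simp
  rw [heq.fderiv_eq]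
  have hdf2 : DifferentiableAt ℝ (fun y => fderiv ℝ f y e) x := by
    have : DifferentiableAt ℝ (fderiv ℝ f) x :=
      (hf.fderiv_right (m := 1) (by norm_num)).differentiableAt one_ne_zero
    exact this.clm_apply (differentiableAt_const e)
  have hdg2 : DifferentiableAt ℝ (fun y => fderiv ℝ g y e) x := by
    have : DifferentiableAt ℝ (fderiv ℝ g) x :=
      (hg.fderiv_right (m := 1) (by norm_num)).differentiableAt one_ne_zero
    exact this.clm_apply (differentiableAt_const e)
  rw [fderiv_fun_add (hdf2.const_mul a) (hdg2.const_mul b),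
    fderiv_const_mul hdf2, fderiv_const_mul hdg2]
  simp

/-- Under semi-stability data `(φ, ψ, K)` with `u ≥ v` in `Ω`, if the operator
`−Δ − K + γ e^v` satisfies the maximum principle on `Ω`, then `ψ/φ ≥ γ/λ` in `Ω`. -/
theorem psi_phi_ratio_bound {N : ℕ} (hN : 1 ≤ N) (Ω : Set (EuclideanSpace ℝ (Fin N)))
    (hΩo : IsOpen Ω) (hΩb : IsBounded Ω) (hΩc : IsConnected Ω)
    (lam gam : ℝ) (hgam : 0 < gam) (hgl : gam ≤ lam)
    (u v phi psi : EuclideanSpace ℝ (Fin N) → ℝ) (K : ℝ) (hK : 0 ≤ K)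
    (hu : ContDiffOn ℝ (⊤ : ℕ∞) u (closure Ω)) (hv : ContDiffOn ℝ (⊤ : ℕ∞) v (closure Ω))
    (hphi : ContDiffOn ℝ (⊤ : ℕ∞) phi (closure Ω)) (hpsi : ContDiffOn ℝ (⊤ : ℕ∞) psi (closure Ω))
    (hphipos : ∀ x ∈ Ω, 0 < phi x) (hpsipos : ∀ x ∈ Ω, 0 < psi x)
    (hphibd : ∀ x ∈ frontier Ω, phi x = 0) (hpsibd : ∀ x ∈ frontier Ω, psi x = 0)
    (huv : ∀ x ∈ Ω, v x ≤ u x)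
    (heqphi : ∀ x ∈ Ω, -laplacian phi x = lam * Real.exp (v x) * psi x + K * phi x)
    (heqpsi : ∀ x ∈ Ω, -laplacian psi x = gam * Real.exp (u x) * phi x + K * psi x)
    (hmp : ∀ w : EuclideanSpace ℝ (Fin N) → ℝ, ContDiffOn ℝ (⊤ : ℕ∞) w (closure Ω) →
      (∀ x ∈ Ω, 0 ≤ -laplacian w x - K * w x + gam * Real.exp (v x) * w x) →
      (∀ x ∈ frontier Ω, 0 ≤ w x) → ∀ x ∈ Ω, 0 ≤ w x) :
    ∀ x ∈ Ω, gam / lam ≤ psi x / phi x := by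
  have hlam : 0 < lam := lt_of_lt_of_le hgam hgl
  set w : EuclideanSpace ℝ (Fin N) → ℝ := fun y => lam * psi y + (-gam) * phi y with hw
  have hwsmooth : ContDiffOn ℝ (⊤ : ℕ∞) w (closure Ω) :=
    (hpsi.const_smul lam).add (hphi.const_smul (-gam))
  have hwin : ∀ x ∈ Ω, 0 ≤ w x := by
    refine hmp w hwsmooth ?_ ?_
    · intro x hx
      have hmem : closure Ω ∈ 𝓝 x := mem_of_superset (hΩo.mem_nhds hx) subset_closure
      have hcpsi : ContDiffAt ℝ 2 psi x := (hpsi.contDiffAt hmem).of_le (WithTop.coe_le_coe.2 le_top)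
      have hcphi : ContDiffAt ℝ 2 phi x := (hphi.contDiffAt hmem).of_le (WithTop.coe_le_coe.2 le_top)
      have hlap : laplacian w x = lam * laplacian psi x + (-gam) * laplacian phi x :=
        laplacian_lin lam (-gam) hcpsi hcphi
      have h1 := heqphi x hx
      have h2 := heqpsi x hx
      have hexp : gam * Real.exp (v x) ≤ lam * Real.exp (u x) := by
        have := Real.exp_le_exp.2 (huv x hx)
        nlinarith [Real.exp_pos (v x), Real.exp_pos (u x)]
      have hphix := (hphipos x hx).le
      have key : -laplacian w x - K * w x + gam * Real.exp (v x) * w x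
          = gam * (phi x * (lam * Real.exp (u x) - gam * Real.exp (v x))) := by
        rw [hlap]; simp only [hw]; nlinarith [h1, h2]
      rw [key]
      exact mul_nonneg hgam.le (mul_nonneg hphix (sub_nonneg.2 hexp))
    · intro x hx
      simp [hw, hphibd x hx, hpsibd x hx]
  intro x hx
  have hphix := hphipos x hx
  rw [div_le_div_iff₀ hlam hphix]
  have := hwin x hx
  simp only [hw] at this
  nlinarith
end
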